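/- arXiv:2002.11335 — 2 statements merged into one kernel-verified Lean document; each statement's English description precedes it below -/
import Mathlib

section
/- Main covariance-kernel estimate: Let β ∈ (0,2) and suppose g_i, g_j : ℝ → ℝ satisfy |g_ℓ(x)| ≤ K(|x|^{κ_ℓ} 1_{[0,1)}(|x|) + |x|^{-α_ℓ} 1_{[1,∞)}(|x|)) with α_ℓ β > 2 and κ_ℓ > -1/β for ℓ ∈ {i,j}. Then there exists a constant C > 0 depending only on max(α_i,α_j) and β such that for all integers k with |k| ≥ 2, ρ_{i,j,k} := ∫_ℝ |g_i(x) g_j(x+k)|^{β/2} dx ≤ C |k|^{-min(α_i, α_j) β / 2}. -/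
open MeasureTheory Set

lemma integrable_aux {p q : ℝ} (hp : -1 < p) (hq : q < -1) :
    MeasureTheory.Integrable (fun x : ℝ => if |x| < 1 then |x| ^ p else |x| ^ q) := by
  set f : ℝ → ℝ := fun x => if |x| < 1 then |x| ^ p else |x| ^ q with hf
  have hioi : IntegrableOn f (Ioi (0:ℝ)) := by
    have h1 : IntegrableOn f (Ioo (0:ℝ) 1) := by
      refine ((intervalIntegral.integrableOn_Ioo_rpow_iff one_pos).2 hp).congr_fun ?_
        measurableSet_Ioo
      intro x hx
      simp only [hf, abs_of_pos hx.1, if_pos hx.2]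
    have h2 : IntegrableOn f (Ici (1:ℝ)) := by
      rw [integrableOn_Ici_iff_integrableOn_Ioi]
      refine ((integrableOn_Ioi_rpow_iff one_pos).2 hq).congr_fun ?_ measurableSet_Ioi
      intro x hx
      have hx1 : (1:ℝ) < x := hx
      simp only [hf, abs_of_pos (by linarith : (0:ℝ) < x)]
      rw [if_neg (by linarith)]
    have h3 := h1.union h2
    refine h3.mono_set ?_
    intro x hx
    rcases lt_or_ge x 1 with h | h
    · exact Or.inl ⟨hx, h⟩
    · exact Or.inr h
  have heven : ∀ x : ℝ, f (-x) = f x := by intro x; simp [hf, abs_neg]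
  have hiio : IntegrableOn f (Iio (0:ℝ)) := by
    have h := (hioi.integrable_indicator measurableSet_Ioi).comp_neg
    have heq : (fun x : ℝ => (Ioi (0:ℝ)).indicator f (-x)) = (Iio (0:ℝ)).indicator f := by
      funext x
      rcases lt_or_ge x 0 with h | h
      · simp [indicator_apply, mem_Ioi, mem_Iio, h, neg_pos.2 h, heven x]
      · simp [indicator_apply, mem_Ioi, mem_Iio, not_lt.2 h, not_lt.2 (neg_nonpos.2 h)]
    rw [heq] at h
    exact (integrable_indicator_iff measurableSet_Iio).1 h
  have h4 : IntegrableOn f ({(0:ℝ)}ᶜ) := by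
    rw [← Iio_union_Ioi]; exact hiio.union hioi
  have huniv : IntegrableOn f univ := h4.congr_set_ae (ae_eq_univ.2 (by simp)).symm
  simpa [integrableOn_univ] using huniv

lemma integrable_aux2 {β κ α K : ℝ} (hβ0 : 0 < β) (hα : α * β > 2)
    (hκ : κ > -1 / β) (hK : 0 ≤ K) :
    MeasureTheory.Integrable
      (fun x : ℝ => (K * (if |x| < 1 then |x| ^ κ else |x| ^ (-α))) ^ (β / 2)) := by
  have hb : (1/β) * β = 1 := by field_simp
  have hκ' : -(1/β) < κ := by rwa [neg_div] at hκ
  have hp : -1 < κ * (β/2) := by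
    nlinarith [mul_pos (show (0:ℝ) < κ + 1/β by linarith) hβ0]
  have hq : -α * (β/2) < -1 := by nlinarith
  have h1 : (fun x : ℝ => (K * (if |x| < 1 then |x| ^ κ else |x| ^ (-α))) ^ (β/2))
      = fun x : ℝ => K ^ (β/2) * (if |x| < 1 then |x| ^ (κ*(β/2)) else |x| ^ (-α*(β/2))) := by
    funext x
    have h0 : (0:ℝ) ≤ if |x| < 1 then |x| ^ κ else |x| ^ (-α) := by
      split_ifs <;> positivity
    rw [Real.mul_rpow hK h0]
    congr 1
    split_ifs
    · rw [← Real.rpow_mul (abs_nonneg x)]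
    · rw [← Real.rpow_mul (abs_nonneg x)]
  rw [h1]
  exact (integrable_aux hp hq).const_mul _

set_option maxHeartbeats 1000000 in
theorem covariance_kernel_estimate
    (β κi κj αi αj K : ℝ) (hβ0 : 0 < β) (hβ2 : β < 2)
    (hαi : αi * β > 2) (hαj : αj * β > 2)
    (hκi : κi > -1 / β) (hκj : κj > -1 / β) (hK : 0 < K)
    (gi gj : ℝ → ℝ) (hgi : Measurable gi) (hgj : Measurable gj)
    (hgib : ∀ x : ℝ, |gi x| ≤ K * (if |x| < 1 then |x| ^ κi else |x| ^ (-αi)))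
    (hgjb : ∀ x : ℝ, |gj x| ≤ K * (if |x| < 1 then |x| ^ κj else |x| ^ (-αj))) :
    ∃ C : ℝ, 0 < C ∧ ∀ k : ℤ, 2 ≤ |k| →
      (∫ x : ℝ, |gi x * gj (x + (k : ℝ))| ^ (β / 2))
        ≤ C * (|k| : ℝ) ^ (-(min αi αj) * β / 2) := by
  have hβ4 : (0:ℝ) < β/2 := by linarith
  have hαi0 : 0 < αi := by nlinarith
  have hαj0 : 0 < αj := by nlinarith
  set Fi : ℝ → ℝ := fun x => (K * (if |x| < 1 then |x| ^ κi else |x| ^ (-αi))) ^ (β/2) with hFidef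
  set Fj : ℝ → ℝ := fun x => (K * (if |x| < 1 then |x| ^ κj else |x| ^ (-αj))) ^ (β/2) with hFjdef
  have IFi : Integrable Fi := integrable_aux2 hβ0 hαi hκi hK.le
  have IFj : Integrable Fj := integrable_aux2 hβ0 hαj hκj hK.le
  have hbase : ∀ (κ α x : ℝ), 0 ≤ K * (if |x| < 1 then |x| ^ κ else |x| ^ (-α)) := by
    intro κ α x
    have h0 : (0:ℝ) ≤ if |x| < 1 then |x| ^ κ else |x| ^ (-α) := by split_ifs <;> positivity
    exact mul_nonneg hK.le h0
  have Fi_nonneg : ∀ x, 0 ≤ Fi x := fun x => Real.rpow_nonneg (hbase _ _ x) _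
  have Fj_nonneg : ∀ x, 0 ≤ Fj x := fun x => Real.rpow_nonneg (hbase _ _ x) _
  set Ii := ∫ x, Fi x with hIidef
  set Ij := ∫ x, Fj x with hIjdef
  have Ii0 : 0 ≤ Ii := integral_nonneg Fi_nonneg
  have Ij0 : 0 ≤ Ij := integral_nonneg Fj_nonneg
  set M := max αi αj with hMdef
  set D := K ^ (β/2) * 2 ^ (M * β / 2) with hDdef
  have hD0 : 0 < D := by positivity
  refine ⟨D * (Ii + Ij) + 1, by positivity, ?_⟩
  intro k hk
  set KR : ℝ := |(k:ℝ)| with hKRdef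
  have hk2 : (2:ℝ) ≤ KR := by rw [hKRdef, ← Int.cast_abs]; exact_mod_cast hk
  set R : ℝ := KR / 2 with hRdef
  have hR1 : 1 ≤ R := by rw [hRdef]; linarith
  have hR0 : (0:ℝ) < R := by linarith
  set em : ℝ := -(min αi αj) * β / 2 with hemdef
  have hKR1 : (1:ℝ) ≤ KR := by linarith
  have hKRem0 : 0 < KR ^ em := Real.rpow_pos_of_pos (by linarith) _
  -- key estimate for the constants
  have hkey : ∀ α : ℝ, min αi αj ≤ α → α ≤ M →
      (K * R ^ (-α)) ^ (β/2) ≤ D * KR ^ em := by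
    intro α hmin hmax
    have e1 : (K * R ^ (-α)) ^ (β/2) = K^(β/2) * R ^ (-α * (β/2)) := by
      rw [Real.mul_rpow hK.le (Real.rpow_nonneg hR0.le _), ← Real.rpow_mul hR0.le]
    have e2 : R ^ (-α * (β/2)) = KR ^ (-α * (β/2)) * 2 ^ (α * (β/2)) := by
      rw [hRdef, Real.div_rpow (by linarith) (by norm_num), div_eq_mul_inv,
        ← Real.rpow_neg (by norm_num : (0:ℝ) ≤ 2)]
      ring_nf
    have A : KR ^ (-α * (β/2)) ≤ KR ^ em := by
      apply Real.rpow_le_rpow_of_exponent_le hKR1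
      rw [hemdef]; nlinarith
    have B : (2:ℝ) ^ (α * (β/2)) ≤ 2 ^ (M * β / 2) := by
      apply Real.rpow_le_rpow_of_exponent_le one_le_two
      nlinarith
    calc (K * R ^ (-α)) ^ (β/2) = K^(β/2) * (KR ^ (-α * (β/2)) * 2 ^ (α * (β/2))) := by
          rw [e1, e2]
      _ ≤ K^(β/2) * (KR ^ em * 2 ^ (M * β / 2)) := by
          apply mul_le_mul_of_nonneg_left _ (by positivity)
          exact mul_le_mul A B (by positivity) (by positivity)
      _ = D * KR ^ em := by rw [hDdef]; ring
  set c1 : ℝ := (K * R ^ (-αj)) ^ (β/2) with hc1def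
  set c2 : ℝ := (K * R ^ (-αi)) ^ (β/2) with hc2def
  have hc10 : 0 ≤ c1 := Real.rpow_nonneg (mul_nonneg hK.le (Real.rpow_nonneg hR0.le _)) _
  have hc20 : 0 ≤ c2 := Real.rpow_nonneg (mul_nonneg hK.le (Real.rpow_nonneg hR0.le _)) _
  set S : Set ℝ := Ioo (-R) R with hSdef
  have hSm : MeasurableSet S := measurableSet_Ioo
  have hmem : ∀ x : ℝ, x ∈ S ↔ |x| < R := fun x => by rw [hSdef, mem_Ioo, ← abs_lt]
  set G : ℝ → ℝ := fun x => if |x| < R then c1 * Fi x else c2 * Fj (x + (k:ℝ)) with hGdef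
  -- pointwise bound
  have hpoint : ∀ x : ℝ, |gi x * gj (x + (k:ℝ))| ^ (β/2) ≤ G x := by
    intro x
    rw [abs_mul, Real.mul_rpow (abs_nonneg _) (abs_nonneg _)]
    have htri : |(k:ℝ)| ≤ |x + (k:ℝ)| + |x| := by
      have h := abs_add_le (x + (k:ℝ)) (-x)
      simpa using h
    by_cases hx : |x| < R
    · rw [hGdef]
      simp only [if_pos hx]
      have h1 : |gi x| ^ (β/2) ≤ Fi x :=
        Real.rpow_le_rpow (abs_nonneg _) (hgib x) hβ4.le
      have hxk : R ≤ |x + (k:ℝ)| := by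
        have : KR = 2 * R := by rw [hRdef]; ring
        linarith
      have h2 : |gj (x + (k:ℝ))| ≤ K * R ^ (-αj) := by
        have hb := hgjb (x + (k:ℝ))
        rw [if_neg (by linarith)] at hb
        refine hb.trans (mul_le_mul_of_nonneg_left ?_ hK.le)
        exact Real.rpow_le_rpow_of_nonpos hR0 hxk (by linarith)
      have h3 : |gj (x + (k:ℝ))| ^ (β/2) ≤ c1 :=
        Real.rpow_le_rpow (abs_nonneg _) h2 hβ4.le
      calc |gi x| ^ (β/2) * |gj (x + (k:ℝ))| ^ (β/2)
          ≤ Fi x * c1 := mul_le_mul h1 h3 (Real.rpow_nonneg (abs_nonneg _) _) (Fi_nonneg x)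
        _ = c1 * Fi x := mul_comm _ _
    · rw [hGdef]
      simp only [if_neg hx]
      push_neg at hx
      have h1 : |gi x| ≤ K * R ^ (-αi) := by
        have hb := hgib x
        rw [if_neg (by linarith)] at hb
        refine hb.trans (mul_le_mul_of_nonneg_left ?_ hK.le)
        exact Real.rpow_le_rpow_of_nonpos hR0 hx (by linarith)
      have h1' : |gi x| ^ (β/2) ≤ c2 :=
        Real.rpow_le_rpow (abs_nonneg _) h1 hβ4.le
      have h2 : |gj (x + (k:ℝ))| ^ (β/2) ≤ Fj (x + (k:ℝ)) :=
        Real.rpow_le_rpow (abs_nonneg _) (hgjb _) hβ4.le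
      exact mul_le_mul h1' h2 (Real.rpow_nonneg (abs_nonneg _) _)
        (le_trans (Real.rpow_nonneg (abs_nonneg _) _) h1')
  -- rewrite G as sum of indicators
  have hGeq : G = fun x => S.indicator (fun x => c1 * Fi x) x
      + Sᶜ.indicator (fun x => c2 * Fj (x + (k:ℝ))) x := by
    funext x
    by_cases hx : |x| < R
    · have hxS : x ∈ S := (hmem x).2 hx
      rw [hGdef]
      simp only [if_pos hx]
      rw [indicator_of_mem hxS, indicator_of_notMem (notMem_compl_iff.2 hxS), add_zero]
    · have hxS : x ∉ S := fun h => hx ((hmem x).1 h)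
      rw [hGdef]
      simp only [if_neg hx]
      rw [indicator_of_notMem hxS, indicator_of_mem (mem_compl hxS), zero_add]
  have IFj' : Integrable (fun x : ℝ => Fj (x + (k:ℝ))) := IFj.comp_add_right _
  have hGint : Integrable G := by
    rw [hGeq]
    exact ((IFi.const_mul c1).indicator hSm).add ((IFj'.const_mul c2).indicator hSm.compl)
  -- integral bound
  have hIG : ∫ x, G x ≤ c1 * Ii + c2 * Ij := by
    rw [hGeq, integral_add ((IFi.const_mul c1).indicator hSm)
      ((IFj'.const_mul c2).indicator hSm.compl),
      integral_indicator hSm, integral_indicator hSm.compl]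
    have A : ∫ x in S, c1 * Fi x ≤ c1 * Ii := by
      rw [integral_const_mul]
      exact mul_le_mul_of_nonneg_left
        (setIntegral_le_integral IFi (Filter.Eventually.of_forall Fi_nonneg)) hc10
    have B : ∫ x in Sᶜ, c2 * Fj (x + (k:ℝ)) ≤ c2 * Ij := by
      rw [integral_const_mul]
      refine mul_le_mul_of_nonneg_left ?_ hc20
      calc ∫ x in Sᶜ, Fj (x + (k:ℝ)) ≤ ∫ x, Fj (x + (k:ℝ)) :=
            setIntegral_le_integral IFj' (Filter.Eventually.of_forall fun x => Fj_nonneg _)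
        _ = Ij := integral_add_right_eq_self Fj (k:ℝ)
    linarith
  have hmain : (∫ x : ℝ, |gi x * gj (x + (k : ℝ))| ^ (β / 2)) ≤ ∫ x, G x :=
    integral_mono_of_nonneg
      (Filter.Eventually.of_forall fun x => Real.rpow_nonneg (abs_nonneg _) _)
      hGint (Filter.Eventually.of_forall hpoint)
  have hc1 : c1 ≤ D * KR ^ em := hkey αj (min_le_right _ _) (le_max_right _ _)
  have hc2 : c2 ≤ D * KR ^ em := hkey αi (min_le_left _ _) (le_max_left _ _)
  have hfinal : c1 * Ii + c2 * Ij ≤ (D * (Ii + Ij) + 1) * KR ^ em := by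
    nlinarith [mul_le_mul_of_nonneg_right hc1 Ii0, mul_le_mul_of_nonneg_right hc2 Ij0]
  calc (∫ x : ℝ, |gi x * gj (x + (k : ℝ))| ^ (β / 2)) ≤ ∫ x, G x := hmain
    _ ≤ c1 * Ii + c2 * Ij := hIG
    _ ≤ (D * (Ii + Ij) + 1) * KR ^ em := hfinal
end

section
/- Integral comparison: Let α > 1, q ≥ 1 with q(1−α) > −1, and n ≥ 2 an integer. Then ∫_{n+1}^{∞} ((s−n)^{1−α} − (s−1)^{1−α})^q ds + ∫_{1}^{∞} (s^{1−α} − (s+n−1)^{1−α})^q ds ≤ C n^{q(1−α)+1} for a constant C depending only on α and q. -/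
/-!
The shift `s ↦ s + n` turns the first integral into the second. Split the second at `s = n`.
On `(1, n]` the integrand is at most `s ^ (q(1-α))`, which integrates to at most
`n ^ (q(1-α)+1) / (q(1-α)+1)`. On `(n, ∞)` the convexity of `x ↦ x ^ (1-α)` gives
`s^(1-α) - (s+n-1)^(1-α) ≤ (α-1) n s^(-α)`; its `q`-th power integrates to
`(α-1)^q n^(q(1-α)+1) / (qα-1)`.
-/

open MeasureTheory Set

theorem setIntegral_Ioi_comp_sub_right {E : Type*} [NormedAddCommGroup E] [NormedSpace ℝ E]
    (f : ℝ → E) (a c : ℝ) : ∫ x in Ioi (a + c), f (x - c) = ∫ x in Ioi a, f x := by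
  have := (measurePreserving_sub_right volume c).setIntegral_preimage_emb
    (measurableEmbedding_subRight c) f (Ioi a)
  rwa [preimage_sub_const_Ioi] at this

theorem setIntegral_Ioi_le_add_of_le {f g h : ℝ → ℝ} {a b : ℝ} (hab : a ≤ b)
    (hf : ∀ x ∈ Ioi a, 0 ≤ f x) (hfg : ∀ x ∈ Ioc a b, f x ≤ g x)
    (hfh : ∀ x ∈ Ioi b, f x ≤ h x) (hg : IntegrableOn g (Ioc a b))
    (hh : IntegrableOn h (Ioi b)) :
    ∫ x in Ioi a, f x ≤ (∫ x in Ioc a b, g x) + ∫ x in Ioi b, h x := by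
  have hg' := hg.integrable_indicator measurableSet_Ioc
  have hh' := hh.integrable_indicator measurableSet_Ioi
  rw [← integral_indicator measurableSet_Ioi, ← integral_indicator measurableSet_Ioc,
    ← integral_indicator measurableSet_Ioi, ← integral_add hg' hh']
  refine integral_mono_of_nonneg (.of_forall (indicator_nonneg hf)) (hg'.add hh')
    (.of_forall fun x => ?_)
  rcases le_or_gt x a with hxa | hax
  · simp [hxa.trans hab, not_lt.2 hxa]
  rcases le_or_gt x b with hxb | hbx
  · simpa [hax, hxb, not_lt.2 hxb] using hfg x ⟨hax, hxb⟩
  · simpa [hax, hbx, not_le.2 hbx] using hfh x hbx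

section RpowDifference

variable {α s d : ℝ}

theorem rpow_one_sub_sub_rpow_nonneg (hα : 1 ≤ α) (hs : 0 < s) (hd : 0 ≤ d) :
    0 ≤ s ^ (1 - α) - (s + d) ^ (1 - α) :=
  sub_nonneg.2 (Real.rpow_le_rpow_of_nonpos hs (by linarith) (by linarith))

theorem rpow_one_sub_sub_rpow_le (hα : 1 ≤ α) (hs : 0 < s) (hd : 0 ≤ d) :
    s ^ (1 - α) - (s + d) ^ (1 - α) ≤ (α - 1) * d * s ^ (-α) := by
  have hderiv :
      ∀ x ∈ interior (Ici s), (1 - α) * s ^ (-α) ≤ deriv (fun x => x ^ (1 - α)) x := by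
    intro x hx
    rw [interior_Ici] at hx
    rw [Real.deriv_rpow_const, sub_sub_cancel_left]
    exact mul_le_mul_of_nonpos_left (Real.rpow_le_rpow_of_nonpos hs hx.le (by linarith))
      (by linarith)
  have := (convex_Ici s).mul_sub_le_image_sub_of_le_deriv
    (fun x hx => (Real.continuousAt_rpow_const x _ (.inl (hs.trans_le hx).ne')).continuousWithinAt)
    (fun x hx => by
      rw [interior_Ici] at hx
      exact (Real.differentiableAt_rpow_const_of_ne _ (hs.trans hx).ne').differentiableWithinAt)
    hderiv s (mem_Ici.2 le_rfl) (s + d) (by simpa using hd) (by linarith)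
  linarith

theorem rpow_one_sub_sub_rpow_rpow_le {q : ℝ} (hα : 1 ≤ α) (hq : 0 ≤ q) (hs : 0 < s)
    (hd : 0 ≤ d) : (s ^ (1 - α) - (s + d) ^ (1 - α)) ^ q ≤ s ^ (q * (1 - α)) := by
  have hle : s ^ (1 - α) - (s + d) ^ (1 - α) ≤ s ^ (1 - α) :=
    sub_le_self _ (Real.rpow_nonneg (by linarith) _)
  calc _ ≤ (s ^ (1 - α)) ^ q :=
        Real.rpow_le_rpow (rpow_one_sub_sub_rpow_nonneg hα hs hd) hle hq
    _ = s ^ (q * (1 - α)) := by rw [← Real.rpow_mul hs.le, mul_comm]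

theorem rpow_one_sub_sub_rpow_rpow_le_mul_rpow {q : ℝ} (hα : 1 ≤ α) (hq : 0 ≤ q)
    (hs : 0 < s) (hd : 0 ≤ d) :
    (s ^ (1 - α) - (s + d) ^ (1 - α)) ^ q ≤ ((α - 1) * d) ^ q * s ^ (-(q * α)) := by
  calc _ ≤ ((α - 1) * d * s ^ (-α)) ^ q :=
        Real.rpow_le_rpow (rpow_one_sub_sub_rpow_nonneg hα hs hd)
          (rpow_one_sub_sub_rpow_le hα hs hd) hq
    _ = ((α - 1) * d) ^ q * s ^ (-(q * α)) := by
      rw [Real.mul_rpow (by nlinarith) (Real.rpow_nonneg hs.le _), ← Real.rpow_mul hs.le, neg_mul,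
        mul_comm α]

end RpowDifference

theorem integral_Ioi_one_rpow_sub_rpow_pow_le {α q m : ℝ} (hα : 1 < α) (hq : 1 ≤ q)
    (hqα : -1 < q * (1 - α)) (hm : 1 ≤ m) :
    ∫ s in Ioi 1, (s ^ (1 - α) - (s + m - 1) ^ (1 - α)) ^ q
      ≤ (1 / (q * (1 - α) + 1) + (α - 1) ^ q / (q * α - 1)) * m ^ (q * (1 - α) + 1) := by
  have hm0 : 0 < m := by linarith
  have hqα1 : 1 < q * α := by nlinarith
  simp_rw [add_sub_assoc]
  have hsplit := setIntegral_Ioi_le_add_of_le hm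
    (g := fun s => s ^ (q * (1 - α))) (h := fun s => ((α - 1) * m) ^ q * s ^ (-(q * α)))
    (fun s hs => Real.rpow_nonneg
      (rpow_one_sub_sub_rpow_nonneg hα.le (zero_lt_one.trans hs) (sub_nonneg.2 hm)) q)
    (fun s hs => rpow_one_sub_sub_rpow_rpow_le hα.le (by linarith) (zero_lt_one.trans hs.1)
      (sub_nonneg.2 hm))
    (fun s hs => by
      refine (rpow_one_sub_sub_rpow_rpow_le_mul_rpow hα.le (by linarith) (hm0.trans hs)
        (sub_nonneg.2 hm)).trans ?_
      have : 0 ≤ s ^ (-(q * α)) := Real.rpow_nonneg (hm0.trans hs).le _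
      gcongr
      nlinarith)
    (intervalIntegral.intervalIntegrable_rpow' hqα).1
    ((integrableOn_Ioi_rpow_of_lt (by linarith) hm0).const_mul _)
  have hIoc : ∫ s in Ioc 1 m, s ^ (q * (1 - α))
      = (m ^ (q * (1 - α) + 1) - 1) / (q * (1 - α) + 1) := by
    rw [← intervalIntegral.integral_of_le hm, integral_rpow (.inl hqα), Real.one_rpow]
  have hIoi : ∫ s in Ioi m, ((α - 1) * m) ^ q * s ^ (-(q * α))
      = (α - 1) ^ q / (q * α - 1) * m ^ (q * (1 - α) + 1) := by
    rw [integral_const_mul, integral_Ioi_rpow_of_lt (by linarith) hm0,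
      Real.mul_rpow (by linarith) hm0.le, mul_assoc, mul_div_assoc', mul_neg,
      ← Real.rpow_add hm0,
      show q + (-(q * α) + 1) = q * (1 - α) + 1 by ring,
      show -(q * α) + 1 = -(q * α - 1) by ring,
      div_neg]
    ring
  calc _ ≤ _ := hsplit
    _ = (m ^ (q * (1 - α) + 1) - 1) / (q * (1 - α) + 1)
        + (α - 1) ^ q / (q * α - 1) * m ^ (q * (1 - α) + 1) := by rw [hIoc, hIoi]
    _ ≤ _ := by
      rw [add_mul, one_div_mul_eq_div]
      gcongr
      · linarith
      · linarith

theorem integral_comparison_bound (α q : ℝ) (hα : 1 < α) (hq : 1 ≤ q)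
    (hqα : q * (1 - α) > -1) :
    ∃ C : ℝ, 0 < C ∧ ∀ n : ℕ, 2 ≤ n →
      (∫ s in Set.Ioi ((n : ℝ) + 1),
          ((s - (n : ℝ)) ^ (1 - α) - (s - 1) ^ (1 - α)) ^ q)
        + (∫ s in Set.Ioi (1 : ℝ),
            (s ^ (1 - α) - (s + (n : ℝ) - 1) ^ (1 - α)) ^ q)
        ≤ C * (n : ℝ) ^ (q * (1 - α) + 1) := by
  have hqα1 : 0 < q * α - 1 := by nlinarith
  have hqα2 : 0 < q * (1 - α) + 1 := by linarith
  have hpow : 0 < (α - 1) ^ q := Real.rpow_pos_of_pos (by linarith) q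
  refine ⟨2 * (1 / (q * (1 - α) + 1) + (α - 1) ^ q / (q * α - 1)), by positivity,
    fun n hn => ?_⟩
  have hn1 : (1 : ℝ) ≤ n := by exact_mod_cast one_le_two.trans hn
  have hshift := setIntegral_Ioi_comp_sub_right
    (fun s => (s ^ (1 - α) - (s + (n : ℝ) - 1) ^ (1 - α)) ^ q) 1 n
  simp only [sub_add_cancel, add_comm (1 : ℝ)] at hshift
  rw [hshift]
  linarith [integral_Ioi_one_rpow_sub_rpow_pow_le hα hq hqα hn1]
end
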